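/- arXiv:gr-qc/9911115 — 7 statements merged into one kernel-verified Lean document; each statement's English description precedes it below -/
import Mathlib

section
/- Let N₁, N₂, N₃, Σ₊, Σ₋ be real numbers satisfying the Wainwright–Hsu vacuum constraint Σ₊² + Σ₋² + (3/4)[N₁² + N₂² + N₃² − 2(N₁N₂ + N₂N₃ + N₃N₁)] = 1, with all Nᵢ > 0 (Bianchi IX). If N₃ ≥ N₂ ≥ N₁ and N₃ ≥ 2, then N₂ ≥ N₃/10. -/
/-- For a Bianchi IX point on the Wainwright–Hsu constraint surface with
`N₃ ≥ N₂ ≥ N₁` and `N₃ ≥ 2`, one has `N₂ ≥ N₃/10`. -/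
theorem stmt_2 (N1 N2 N3 Sp Sm : ℝ)
    (hcon : Sp ^ 2 + Sm ^ 2 +
      (3 / 4) * (N1 ^ 2 + N2 ^ 2 + N3 ^ 2 - 2 * (N1 * N2 + N2 * N3 + N3 * N1)) = 1)
    (h1 : 0 < N1) (h2 : 0 < N2) (h3 : 0 < N3)
    (h12 : N1 ≤ N2) (h23 : N2 ≤ N3) (hN3 : 2 ≤ N3) :
    N3 / 10 ≤ N2 := by
  by_contra h
  push_neg at h
  nlinarith [sq_nonneg Sp, sq_nonneg Sm, sq_nonneg (N1 - N2), mul_pos h1 h3, mul_pos h2 h3, sq_nonneg N3]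
end

section
/- For any solution of the Wainwright–Hsu equations for class A vacuum Bianchi models that is not of type IX (i.e., not all three Nᵢ have the same strict sign), the constraint implies Σ₊² + Σ₋² ≤ 1 at every time, and hence the maximal existence interval of the solution is all of ℝ. -/
noncomputable def qq (Sp Sm : ℝ → ℝ) (τ : ℝ) : ℝ := 2 * (Sp τ ^ 2 + Sm τ ^ 2)

noncomputable def Spl (N1 N2 N3 : ℝ → ℝ) (τ : ℝ) : ℝ :=
  (1 / 2) * ((N2 τ - N3 τ) ^ 2 - N1 τ * (2 * N1 τ - N2 τ - N3 τ))

noncomputable def Smi (N1 N2 N3 : ℝ → ℝ) (τ : ℝ) : ℝ :=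
  (Real.sqrt 3 / 2) * ((N3 τ - N2 τ) * (N1 τ - N2 τ - N3 τ))

/-- The Wainwright–Hsu vacuum constraint. -/
def Constraint (N1 N2 N3 Sp Sm : ℝ → ℝ) (τ : ℝ) : Prop :=
  Sp τ ^ 2 + Sm τ ^ 2 +
      (3 / 4) * (N1 τ ^ 2 + N2 τ ^ 2 + N3 τ ^ 2 -
        2 * (N1 τ * N2 τ + N2 τ * N3 τ + N3 τ * N1 τ)) = 1

/-- `(N1, N2, N3, Sp, Sm)` solves the Wainwright–Hsu system (with constraint) on `S`. -/
def IsWHSolutionOn (N1 N2 N3 Sp Sm : ℝ → ℝ) (S : Set ℝ) : Prop :=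
  ∀ τ ∈ S,
    HasDerivAt N1 ((qq Sp Sm τ - 4 * Sp τ) * N1 τ) τ ∧
    HasDerivAt N2 ((qq Sp Sm τ + 2 * Sp τ + 2 * Real.sqrt 3 * Sm τ) * N2 τ) τ ∧
    HasDerivAt N3 ((qq Sp Sm τ + 2 * Sp τ - 2 * Real.sqrt 3 * Sm τ) * N3 τ) τ ∧
    HasDerivAt Sp (-(2 - qq Sp Sm τ) * Sp τ - 3 * Spl N1 N2 N3 τ) τ ∧
    HasDerivAt Sm (-(2 - qq Sp Sm τ) * Sm τ - 3 * Smi N1 N2 N3 τ) τ ∧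
    Constraint N1 N2 N3 Sp Sm τ

open Set Filter Topology Metric Real

/-!
Each `Nᵢ` solves a scalar linear equation `Nᵢ' = ρᵢ Nᵢ`, so `Nᵢ(τ) = Nᵢ(0) exp ∫₀^τ ρᵢ` keeps
its sign. Off type IX some product `Nᵢ Nⱼ` is `≤ 0` at `τ = 0`, hence at all times, and then the
quadratic form of the constraint is `(Nᵢ + Nⱼ - Nₖ)² - 4 Nᵢ Nⱼ ≥ 0`, which gives
`Σ₊² + Σ₋² ≤ 1`.

With the shear bounded, `|ρᵢ| ≤ 8`, so the solution grows at most like `e^{8|τ|}` and stays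
bounded on bounded time intervals. Picard–Lindelöf therefore continues it past any time `t`
by a step depending only on a bound for `|t|`; the constraint propagates to the continuation since
`C = Σ₊² + Σ₋² + (3/4)(…) - 1` obeys `C' = 2q C`. Maximality then makes `I` closed as well as
open in `ℝ`.
-/

theorem hasDerivAt_prodMk_iff {𝕜 E F : Type*} [NontriviallyNormedField 𝕜]
    [NormedAddCommGroup E] [NormedSpace 𝕜 E] [NormedAddCommGroup F] [NormedSpace 𝕜 F]
    {f : 𝕜 → E} {g : 𝕜 → F} {e : E} {e' : F} {x : 𝕜} :
    HasDerivAt (fun t => (f t, g t)) (e, e') x ↔ HasDerivAt f e x ∧ HasDerivAt g e' x :=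
  ⟨fun h => ⟨by simpa using h.hasFDerivAt.fst.hasDerivAt,
    by simpa using h.hasFDerivAt.snd.hasDerivAt⟩, fun h => h.1.prodMk h.2⟩

section Algebra

variable {α : Type*} [CommRing α] [LinearOrder α] [IsStrictOrderedRing α] {x y z : α}

theorem mul_nonpos_or_mul_nonpos_or_mul_nonpos
    (h : ¬((0 < x ∧ 0 < y ∧ 0 < z) ∨ (x < 0 ∧ y < 0 ∧ z < 0))) :
    x * y ≤ 0 ∨ y * z ≤ 0 ∨ z * x ≤ 0 := by
  by_contra! hpos
  obtain ⟨hxy, hyz, hzx⟩ := hpos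
  rcases lt_trichotomy x 0 with hx | hx | hx
  · exact h (Or.inr ⟨hx, by nlinarith, by nlinarith⟩)
  · simp [hx] at hxy
  · exact h (Or.inl ⟨hx, by nlinarith, by nlinarith⟩)

theorem sq_add_sq_add_sq_sub_two_mul_nonneg (h : x * y ≤ 0 ∨ y * z ≤ 0 ∨ z * x ≤ 0) :
    0 ≤ x ^ 2 + y ^ 2 + z ^ 2 - 2 * (x * y + y * z + z * x) := by
  rcases h with h | h | h
  · nlinarith [sq_nonneg (x + y - z)]
  · nlinarith [sq_nonneg (y + z - x)]
  · nlinarith [sq_nonneg (z + x - y)]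

end Algebra

section LinearODE

variable {s : Set ℝ} {w ρ : ℝ → ℝ} {t₀ : ℝ}

theorem eq_mul_exp_integral_of_hasDerivAt (hs : IsOpen s) (hs' : IsPreconnected s)
    (ht₀ : t₀ ∈ s) (hρ : ContinuousOn ρ s) (hw : ∀ t ∈ s, HasDerivAt w (ρ t * w t) t) :
    ∀ t ∈ s, w t = w t₀ * exp (∫ u in t₀..t, ρ u) := by
  set A : ℝ → ℝ := fun t => ∫ u in t₀..t, ρ u
  have hA : ∀ t ∈ s, HasDerivAt A (ρ t) t := fun t ht =>
    intervalIntegral.integral_hasDerivAt_right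
      (hρ.mono (hs'.ordConnected.uIcc_subset ht₀ ht)).intervalIntegrable
      (hρ.stronglyMeasurableAtFilter hs t ht) (hρ.continuousAt (hs.mem_nhds ht))
  have hconst : ∀ t ∈ s, HasDerivAt (fun t => w t * exp (-A t)) 0 t := fun t ht => by
    refine ((hw t ht).mul (hA t ht).neg.exp).congr_deriv ?_
    simp only [Pi.neg_apply]
    ring
  intro t ht
  have h := hs.is_const_of_deriv_eq_zero hs'
    (fun t ht => (hconst t ht).differentiableAt.differentiableWithinAt)
    (fun t ht => (hconst t ht).deriv) ht ht₀
  simp only [A, intervalIntegral.integral_same, neg_zero, exp_zero, mul_one] at h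
  rw [← h, mul_assoc, ← exp_add, neg_add_cancel, exp_zero, mul_one]

theorem exists_pos_eq_mul_of_hasDerivAt (hs : IsOpen s) (hs' : IsPreconnected s)
    (ht₀ : t₀ ∈ s) (hρ : ContinuousOn ρ s) (hw : ∀ t ∈ s, HasDerivAt w (ρ t * w t) t) :
    ∀ t ∈ s, ∃ c > 0, w t = c * w t₀ := fun t ht =>
  ⟨_, exp_pos _, (eq_mul_exp_integral_of_hasDerivAt hs hs' ht₀ hρ hw t ht).trans (mul_comm _ _)⟩

theorem abs_le_mul_exp_of_hasDerivAt (hs : IsOpen s) (hs' : IsPreconnected s)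
    (ht₀ : t₀ ∈ s) (hρ : ContinuousOn ρ s) (hw : ∀ t ∈ s, HasDerivAt w (ρ t * w t) t)
    {K : ℝ} (hK : ∀ t ∈ s, |ρ t| ≤ K) :
    ∀ t ∈ s, |w t| ≤ |w t₀| * exp (K * |t - t₀|) := by
  intro t ht
  rw [eq_mul_exp_integral_of_hasDerivAt hs hs' ht₀ hρ hw t ht, abs_mul, abs_exp]
  have hint : ‖∫ u in t₀..t, ρ u‖ ≤ K * |t - t₀| :=
    intervalIntegral.norm_integral_le_of_norm_le_const fun u hu =>
      hK u (hs'.ordConnected.uIcc_subset ht₀ ht (uIoc_subset_uIcc hu))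
  gcongr
  exact (le_abs_self _).trans hint

end LinearODE

section AutonomousODE

variable {E : Type*} [NormedAddCommGroup E] [NormedSpace ℝ E] {v : E → E}

theorem eqOn_of_hasDerivAt_of_locallyLipschitz (hv : LocallyLipschitz v) {s : Set ℝ}
    (hs : IsOpen s) (hs' : IsPreconnected s) {f g : ℝ → E}
    (hf : ∀ t ∈ s, HasDerivAt f (v (f t)) t) (hg : ∀ t ∈ s, HasDerivAt g (v (g t)) t)
    {t₀ : ℝ} (ht₀ : t₀ ∈ s) (heq : f t₀ = g t₀) : EqOn f g s := by
  -- the coincidence set of `f` and `g` is open and closed in `s`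
  have hloc : ∀ t ∈ s, ∀ᶠ u in 𝓝 t, (f t = g t ↔ f u = g u) := by
    intro t ht
    have hfc := (hf t ht).continuousAt
    have hgc := (hg t ht).continuousAt
    by_cases htfg : f t = g t
    · obtain ⟨K, u, hu, hK⟩ := hv (f t)
      have hsol : ∀ h : ℝ → E, (∀ t ∈ s, HasDerivAt h (v (h t)) t) → ContinuousAt h t →
          h t = f t → ∀ᶠ r in 𝓝 t, HasDerivAt h (v (h r)) r ∧ h r ∈ u := fun h hh hc hft => by
        filter_upwards [hs.mem_nhds ht, hc.preimage_mem_nhds (hft ▸ hu)] with r hr hru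
        exact ⟨hh r hr, hru⟩
      filter_upwards [ODE_solution_unique_of_eventually (v := fun _ => v) (s := fun _ => u)
        (Eventually.of_forall fun _ => hK) (hsol f hf hfc rfl) (hsol g hg hgc htfg.symm) htfg]
        with r hr
      exact iff_of_true htfg hr
    · filter_upwards [(hfc.sub hgc).eventually_ne (sub_ne_zero.2 htfg)] with r hr
      exact iff_of_false htfg (sub_ne_zero.1 hr)
  intro t ht
  refine (hs'.induction₂' (fun a b => f a = g a ↔ f b = g b) (fun a ha => ?_)
    (fun _ _ _ _ _ _ => Iff.trans) ht₀ ht).1 heq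
  filter_upwards [nhdsWithin_le_nhds (hloc a ha)] with b hb
  exact ⟨hb, hb.symm⟩

theorem exists_pos_forall_norm_le_exists_hasDerivAt [ProperSpace E] (hv : LocallyLipschitz v)
    (R : ℝ) : ∃ ε > 0, ∀ x₀ : E, ‖x₀‖ ≤ R → ∀ t₀ : ℝ, ∃ α : ℝ → E, α t₀ = x₀ ∧
      ∀ t ∈ Ioo (t₀ - ε) (t₀ + ε), HasDerivAt α (v (α t)) t := by
  obtain ⟨K, hK⟩ := hv.locallyLipschitzOn.exists_lipschitzOnWith_of_compact
    (isCompact_closedBall (0 : E) (R + 1))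
  obtain ⟨C, hC⟩ := (isCompact_closedBall (0 : E) (R + 1)).exists_bound_of_continuousOn
    hv.continuous.continuousOn
  set L : NNReal := ⟨max C 1, le_max_of_le_right zero_le_one⟩
  have hL : (0 : ℝ) < L := lt_max_of_lt_right one_pos
  refine ⟨1 / L, by positivity, fun x₀ hx₀ t₀ => ?_⟩
  have hball : closedBall x₀ (1 : NNReal) ⊆ closedBall 0 (R + 1) := fun x hx => by
    rw [mem_closedBall, dist_zero_right, NNReal.coe_one, dist_eq_norm] at *
    linarith [norm_le_norm_add_norm_sub' x x₀]
  have hpl : IsPicardLindelof (fun _ => v) (tmin := t₀ - 1 / L) (tmax := t₀ + 1 / L)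
      ⟨t₀, by constructor <;> linarith [one_div_pos.2 hL]⟩ x₀ 1 0 L K :=
    IsPicardLindelof.of_time_independent
      (fun x hx => (hC x (hball hx)).trans (le_max_left _ _)) (hK.mono hball)
      (by simp [hL.ne'])
  obtain ⟨α, hα₀, hα⟩ := hpl.exists_eq_forall_mem_Icc_hasDerivWithinAt₀
  exact ⟨α, hα₀, fun t ht =>
    (hα t (Ioo_subset_Icc_self ht)).hasDerivAt (Icc_mem_nhds ht.1 ht.2)⟩

theorem exists_pos_forall_norm_le_exists_extension [ProperSpace E] (hv : LocallyLipschitz v)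
    (R : ℝ) : ∃ ε > 0, ∀ (I : Set ℝ) (γ : ℝ → E) (t₁ : ℝ), IsOpen I → IsPreconnected I →
      (∀ t ∈ I, HasDerivAt γ (v (γ t)) t) → t₁ ∈ I → ‖γ t₁‖ ≤ R →
      ∃ γ' : ℝ → E, (∀ t ∈ I ∪ Ioo (t₁ - ε) (t₁ + ε), HasDerivAt γ' (v (γ' t)) t) ∧
        EqOn γ' γ I := by
  classical
  obtain ⟨ε, hε, hex⟩ := exists_pos_forall_norm_le_exists_hasDerivAt hv R
  refine ⟨ε, hε, fun I γ t₁ hI hI' hγ ht₁ hR => ?_⟩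
  obtain ⟨α, hα₁, hα⟩ := hex (γ t₁) hR t₁
  set U := Ioo (t₁ - ε) (t₁ + ε)
  have ht₁U : t₁ ∈ U := ⟨by linarith, by linarith⟩
  have hγα : EqOn γ α (I ∩ U) :=
    eqOn_of_hasDerivAt_of_locallyLipschitz hv (hI.inter isOpen_Ioo)
      (hI'.ordConnected.inter ordConnected_Ioo).isPreconnected
      (fun t ht => hγ t ht.1) (fun t ht => hα t ht.2) ⟨ht₁, ht₁U⟩ hα₁.symm
  have hUα : EqOn (I.piecewise γ α) α U := fun t ht => by
    by_cases htI : t ∈ I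
    · rw [piecewise_eq_of_mem _ _ _ htI, hγα ⟨htI, ht⟩]
    · rw [piecewise_eq_of_notMem _ _ _ htI]
  refine ⟨I.piecewise γ α, fun t ht => ?_, piecewise_eqOn _ _ _⟩
  rcases ht with htI | htU
  · rw [piecewise_eq_of_mem _ _ _ htI]
    exact (hγ t htI).congr_of_eventuallyEq
      (eventually_of_mem (hI.mem_nhds htI) (piecewise_eqOn _ _ _))
  · rw [hUα htU]
    exact (hα t htU).congr_of_eventuallyEq (eventually_of_mem (isOpen_Ioo.mem_nhds htU) hUα)

end AutonomousODE

theorem eq_univ_of_forall_abs_le_Ioo_subset {I : Set ℝ} (hI : I.Nonempty)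
    (h : ∀ T, ∃ ε > 0, ∀ t ∈ I, |t| ≤ T → Ioo (t - ε) (t + ε) ⊆ I) : I = univ := by
  refine IsClopen.eq_univ ⟨closure_subset_iff_isClosed.1 fun x hx => ?_,
    isOpen_iff_mem_nhds.2 fun t ht => ?_⟩ hI
  · obtain ⟨ε, hε, hε'⟩ := h (|x| + 1)
    obtain ⟨t, ht, hxt⟩ := Metric.mem_closure_iff.1 hx (min ε 1) (lt_min hε one_pos)
    rw [Real.dist_eq, lt_min_iff, abs_lt, abs_lt] at hxt
    obtain ⟨⟨hε₁, hε₂⟩, h₁, h₂⟩ := hxt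
    refine hε' t ht (abs_le.2 ⟨?_, ?_⟩) ⟨?_, ?_⟩ <;> linarith [neg_abs_le x, le_abs_self x]
  · obtain ⟨ε, hε, hε'⟩ := h |t|
    exact mem_of_superset (Ioo_mem_nhds (by linarith) (by linarith)) (hε' t ht le_rfl)

-- coordinates `(N₁, N₂, N₃, Σ₊, Σ₋)`
abbrev WHState : Type := ℝ × ℝ × ℝ × ℝ × ℝ

noncomputable def whField : WHState → WHState
  | (n₁, n₂, n₃, sp, sm) =>
    ((2 * (sp ^ 2 + sm ^ 2) - 4 * sp) * n₁,
      (2 * (sp ^ 2 + sm ^ 2) + 2 * sp + 2 * √3 * sm) * n₂,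
      (2 * (sp ^ 2 + sm ^ 2) + 2 * sp - 2 * √3 * sm) * n₃,
      -(2 - 2 * (sp ^ 2 + sm ^ 2)) * sp - 3 * (1 / 2 * ((n₂ - n₃) ^ 2 - n₁ * (2 * n₁ - n₂ - n₃))),
      -(2 - 2 * (sp ^ 2 + sm ^ 2)) * sm - 3 * (√3 / 2 * ((n₃ - n₂) * (n₁ - n₂ - n₃))))

noncomputable def whConstraint : WHState → ℝ
  | (n₁, n₂, n₃, sp, sm) =>
    sp ^ 2 + sm ^ 2 + 3 / 4 * (n₁ ^ 2 + n₂ ^ 2 + n₃ ^ 2 - 2 * (n₁ * n₂ + n₂ * n₃ + n₃ * n₁))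

def whCurve (N1 N2 N3 Sp Sm : ℝ → ℝ) (τ : ℝ) : WHState := (N1 τ, N2 τ, N3 τ, Sp τ, Sm τ)

theorem contDiff_whField : ContDiff ℝ 1 whField := by
  change ContDiff ℝ 1 fun x : WHState => whField (x.1, x.2.1, x.2.2.1, x.2.2.2.1, x.2.2.2.2)
  unfold whField
  fun_prop

theorem hasDerivAt_whCurve_iff {N1 N2 N3 Sp Sm : ℝ → ℝ} {τ : ℝ} :
    HasDerivAt (whCurve N1 N2 N3 Sp Sm) (whField (whCurve N1 N2 N3 Sp Sm τ)) τ ↔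
      HasDerivAt N1 ((qq Sp Sm τ - 4 * Sp τ) * N1 τ) τ ∧
      HasDerivAt N2 ((qq Sp Sm τ + 2 * Sp τ + 2 * √3 * Sm τ) * N2 τ) τ ∧
      HasDerivAt N3 ((qq Sp Sm τ + 2 * Sp τ - 2 * √3 * Sm τ) * N3 τ) τ ∧
      HasDerivAt Sp (-(2 - qq Sp Sm τ) * Sp τ - 3 * Spl N1 N2 N3 τ) τ ∧
      HasDerivAt Sm (-(2 - qq Sp Sm τ) * Sm τ - 3 * Smi N1 N2 N3 τ) τ :=
  hasDerivAt_prodMk_iff.trans <| and_congr_right' <| hasDerivAt_prodMk_iff.trans <|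
    and_congr_right' <| hasDerivAt_prodMk_iff.trans <| and_congr_right' hasDerivAt_prodMk_iff

theorem isWHSolutionOn_iff {N1 N2 N3 Sp Sm : ℝ → ℝ} {S : Set ℝ} :
    IsWHSolutionOn N1 N2 N3 Sp Sm S ↔ ∀ τ ∈ S,
      HasDerivAt (whCurve N1 N2 N3 Sp Sm) (whField (whCurve N1 N2 N3 Sp Sm τ)) τ ∧
        whConstraint (whCurve N1 N2 N3 Sp Sm τ) = 1 := by
  refine forall₂_congr fun τ _ => ?_
  rw [hasDerivAt_whCurve_iff]
  simp only [and_assoc]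
  rfl

theorem whConstraint_eq_one_of_hasDerivAt {U : Set ℝ} (hU : IsOpen U) (hU' : IsPreconnected U)
    {γ : ℝ → WHState} (hγ : ∀ t ∈ U, HasDerivAt γ (whField (γ t)) t) {t₁ : ℝ} (ht₁ : t₁ ∈ U)
    (h₁ : whConstraint (γ t₁) = 1) : ∀ t ∈ U, whConstraint (γ t) = 1 := by
  set N1 := fun t => (γ t).1
  set N2 := fun t => (γ t).2.1
  set N3 := fun t => (γ t).2.2.1
  set Sp := fun t => (γ t).2.2.2.1
  set Sm := fun t => (γ t).2.2.2.2
  have hγ' : ∀ t ∈ U, HasDerivAt N1 _ t ∧ HasDerivAt N2 _ t ∧ HasDerivAt N3 _ t ∧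
      HasDerivAt Sp _ t ∧ HasDerivAt Sm _ t := fun t ht => hasDerivAt_whCurve_iff.1 (hγ t ht)
  have hw : ∀ t ∈ U, HasDerivAt (fun t => whConstraint (γ t) - 1)
      (4 * (Sp t ^ 2 + Sm t ^ 2) * (whConstraint (γ t) - 1)) t := by
    intro t ht
    obtain ⟨h1, h2, h3, h4, h5⟩ := hγ' t ht
    refine ((((h4.pow 2).add (h5.pow 2)).add (((((h1.pow 2).add (h2.pow 2)).add
      (h3.pow 2)).sub ((((h1.mul h2).add (h2.mul h3)).add (h3.mul h1)).const_mul 2)).const_mul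
      (3 / 4))).sub_const 1).congr_deriv ?_
    simp only [qq, Spl, Smi, whConstraint]
    push_cast
    ring
  have hρ : ContinuousOn (fun t => 4 * (Sp t ^ 2 + Sm t ^ 2)) U := by
    have hSp := HasDerivAt.continuousOn fun t ht => (hγ' t ht).2.2.2.1
    have hSm := HasDerivAt.continuousOn fun t ht => (hγ' t ht).2.2.2.2
    fun_prop
  intro t ht
  obtain ⟨c, -, hc⟩ := exists_pos_eq_mul_of_hasDerivAt hU hU' ht₁ hρ hw t ht
  rw [h₁, sub_self, mul_zero, sub_eq_zero] at hc
  exact hc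

theorem isWHSolutionOn_of_hasDerivAt {U : Set ℝ} (hU : IsOpen U) (hU' : IsPreconnected U)
    {γ : ℝ → WHState} (hγ : ∀ t ∈ U, HasDerivAt γ (whField (γ t)) t) {t₁ : ℝ} (ht₁ : t₁ ∈ U)
    (h₁ : whConstraint (γ t₁) = 1) :
    IsWHSolutionOn (fun t => (γ t).1) (fun t => (γ t).2.1) (fun t => (γ t).2.2.1)
      (fun t => (γ t).2.2.2.1) (fun t => (γ t).2.2.2.2) U :=
  isWHSolutionOn_iff.2 fun t ht =>
    ⟨hγ t ht, whConstraint_eq_one_of_hasDerivAt hU hU' hγ ht₁ h₁ t ht⟩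

theorem abs_whRates_le {x y : ℝ} (h : x ^ 2 + y ^ 2 ≤ 1) :
    |2 * (x ^ 2 + y ^ 2) - 4 * x| ≤ 8 ∧ |2 * (x ^ 2 + y ^ 2) + 2 * x + 2 * √3 * y| ≤ 8 ∧
      |2 * (x ^ 2 + y ^ 2) + 2 * x - 2 * √3 * y| ≤ 8 := by
  have hx : |x| ≤ 1 := sq_le_one_iff_abs_le_one x |>.1 (by nlinarith)
  have hy : |y| ≤ 1 := sq_le_one_iff_abs_le_one y |>.1 (by nlinarith)
  have h3 : √3 ≤ 2 := by rw [sqrt_le_left (by norm_num)]; norm_num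
  have h3y : |√3 * y| ≤ 2 := by
    rw [abs_mul, abs_of_nonneg (sqrt_nonneg 3)]; nlinarith [abs_nonneg y]
  refine ⟨?_, ?_, ?_⟩ <;> rw [abs_le] at * <;> constructor <;> nlinarith

namespace IsWHSolutionOn

variable {N1 N2 N3 Sp Sm : ℝ → ℝ} {I : Set ℝ} {t₀ : ℝ}

theorem continuousOn_Sp (h : IsWHSolutionOn N1 N2 N3 Sp Sm I) : ContinuousOn Sp I :=
  HasDerivAt.continuousOn fun t ht => (h t ht).2.2.2.1

theorem continuousOn_Sm (h : IsWHSolutionOn N1 N2 N3 Sp Sm I) : ContinuousOn Sm I :=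
  HasDerivAt.continuousOn fun t ht => (h t ht).2.2.2.2.1

theorem mul_nonpos (h : IsWHSolutionOn N1 N2 N3 Sp Sm I) (hI : IsOpen I)
    (hI' : IsPreconnected I) (ht₀ : t₀ ∈ I)
    (h₀ : N1 t₀ * N2 t₀ ≤ 0 ∨ N2 t₀ * N3 t₀ ≤ 0 ∨ N3 t₀ * N1 t₀ ≤ 0) :
    ∀ t ∈ I, N1 t * N2 t ≤ 0 ∨ N2 t * N3 t ≤ 0 ∨ N3 t * N1 t ≤ 0 := by
  have hSp := h.continuousOn_Sp
  have hSm := h.continuousOn_Sm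
  intro t ht
  obtain ⟨c₁, hc₁, e₁⟩ := exists_pos_eq_mul_of_hasDerivAt hI hI' ht₀ (by unfold qq; fun_prop)
    (fun t ht => (h t ht).1) t ht
  obtain ⟨c₂, hc₂, e₂⟩ := exists_pos_eq_mul_of_hasDerivAt hI hI' ht₀ (by unfold qq; fun_prop)
    (fun t ht => (h t ht).2.1) t ht
  obtain ⟨c₃, hc₃, e₃⟩ := exists_pos_eq_mul_of_hasDerivAt hI hI' ht₀ (by unfold qq; fun_prop)
    (fun t ht => (h t ht).2.2.1) t ht
  have key {a b x y : ℝ} (ha : 0 < a) (hb : 0 < b) (hxy : x * y ≤ 0) : a * x * (b * y) ≤ 0 := by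
    rw [mul_mul_mul_comm]; exact mul_nonpos_of_nonneg_of_nonpos (mul_pos ha hb).le hxy
  rw [e₁, e₂, e₃]
  exact h₀.imp (key hc₁ hc₂) (Or.imp (key hc₂ hc₃) (key hc₃ hc₁))

theorem sq_add_sq_le_one (h : IsWHSolutionOn N1 N2 N3 Sp Sm I) (hI : IsOpen I)
    (hI' : IsPreconnected I) (ht₀ : t₀ ∈ I)
    (hnotIX : ¬((0 < N1 t₀ ∧ 0 < N2 t₀ ∧ 0 < N3 t₀) ∨ (N1 t₀ < 0 ∧ N2 t₀ < 0 ∧ N3 t₀ < 0))) :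
    ∀ t ∈ I, Sp t ^ 2 + Sm t ^ 2 ≤ 1 := by
  intro t ht
  have hform := sq_add_sq_add_sq_sub_two_mul_nonneg
    (h.mul_nonpos hI hI' ht₀ (mul_nonpos_or_mul_nonpos_or_mul_nonpos hnotIX) t ht)
  have hcon : Constraint N1 N2 N3 Sp Sm t := (h t ht).2.2.2.2.2
  unfold Constraint at hcon
  linarith

theorem abs_le_mul_exp (h : IsWHSolutionOn N1 N2 N3 Sp Sm I) (hI : IsOpen I)
    (hI' : IsPreconnected I) (ht₀ : t₀ ∈ I) (hshear : ∀ t ∈ I, Sp t ^ 2 + Sm t ^ 2 ≤ 1) :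
    ∀ t ∈ I, |N1 t| ≤ |N1 t₀| * exp (8 * |t - t₀|) ∧ |N2 t| ≤ |N2 t₀| * exp (8 * |t - t₀|) ∧
      |N3 t| ≤ |N3 t₀| * exp (8 * |t - t₀|) := by
  have hSp := h.continuousOn_Sp
  have hSm := h.continuousOn_Sm
  intro t ht
  exact ⟨abs_le_mul_exp_of_hasDerivAt hI hI' ht₀ (by unfold qq; fun_prop)
      (fun t ht => (h t ht).1) (fun t ht => (abs_whRates_le (hshear t ht)).1) t ht,
    abs_le_mul_exp_of_hasDerivAt hI hI' ht₀ (by unfold qq; fun_prop)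
      (fun t ht => (h t ht).2.1) (fun t ht => (abs_whRates_le (hshear t ht)).2.1) t ht,
    abs_le_mul_exp_of_hasDerivAt hI hI' ht₀ (by unfold qq; fun_prop)
      (fun t ht => (h t ht).2.2.1) (fun t ht => (abs_whRates_le (hshear t ht)).2.2) t ht⟩

theorem exists_norm_whCurve_le (h : IsWHSolutionOn N1 N2 N3 Sp Sm I) (hI : IsOpen I)
    (hI' : IsPreconnected I) (ht₀ : t₀ ∈ I) (hshear : ∀ t ∈ I, Sp t ^ 2 + Sm t ^ 2 ≤ 1) (T : ℝ) :
    ∃ R, ∀ t ∈ I, |t - t₀| ≤ T → ‖whCurve N1 N2 N3 Sp Sm t‖ ≤ R := by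
  refine ⟨(|N1 t₀| + |N2 t₀| + |N3 t₀|) * exp (8 * T) + 1, fun t ht hT => ?_⟩
  obtain ⟨h1, h2, h3⟩ := h.abs_le_mul_exp hI hI' ht₀ hshear t ht
  have hexp : exp (8 * |t - t₀|) ≤ exp (8 * T) := exp_le_exp.2 (by linarith)
  have hSp : |Sp t| ≤ 1 := (sq_le_one_iff_abs_le_one _).1 (by nlinarith [hshear t ht])
  have hSm : |Sm t| ≤ 1 := (sq_le_one_iff_abs_le_one _).1 (by nlinarith [hshear t ht])
  simp only [whCurve, norm_prod_le_iff, Real.norm_eq_abs]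
  refine ⟨?_, ?_, ?_, ?_, ?_⟩ <;> nlinarith [abs_nonneg (N1 t₀), abs_nonneg (N2 t₀),
    abs_nonneg (N3 t₀), exp_pos (8 * T)]

end IsWHSolutionOn

/-- For a non-type-IX solution of the Wainwright–Hsu system, the constraint forces
`Σ₊² + Σ₋² ≤ 1` at every time, and a maximal such solution is defined on all of `ℝ`. -/
theorem stmt_6 (N1 N2 N3 Sp Sm : ℝ → ℝ) (I : Set ℝ)
    (hopen : IsOpen I) (hconn : IsPreconnected I) (h0 : (0 : ℝ) ∈ I)
    (hsol : IsWHSolutionOn N1 N2 N3 Sp Sm I)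
    (hnotIX : ¬ ((0 < N1 0 ∧ 0 < N2 0 ∧ 0 < N3 0) ∨
      (N1 0 < 0 ∧ N2 0 < 0 ∧ N3 0 < 0)))
    (hmax : ∀ (J : Set ℝ) (M1 M2 M3 P Q : ℝ → ℝ), IsOpen J → IsPreconnected J →
      I ⊆ J → IsWHSolutionOn M1 M2 M3 P Q J →
      (∀ τ ∈ I, M1 τ = N1 τ ∧ M2 τ = N2 τ ∧ M3 τ = N3 τ ∧ P τ = Sp τ ∧ Q τ = Sm τ) →
      J = I) :
    (∀ τ ∈ I, Sp τ ^ 2 + Sm τ ^ 2 ≤ 1) ∧ I = Set.univ := by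
  have hshear := hsol.sq_add_sq_le_one hopen hconn h0 hnotIX
  refine ⟨hshear, eq_univ_of_forall_abs_le_Ioo_subset ⟨0, h0⟩ fun T => ?_⟩
  obtain ⟨R, hR⟩ := hsol.exists_norm_whCurve_le hopen hconn h0 hshear T
  obtain ⟨ε, hε, hext⟩ :=
    exists_pos_forall_norm_le_exists_extension contDiff_whField.locallyLipschitz R
  refine ⟨ε, hε, fun t₁ ht₁ hT => ?_⟩
  obtain ⟨γ, hγ, hγI⟩ := hext I _ t₁ hopen hconn (fun t ht => (isWHSolutionOn_iff.1 hsol t ht).1)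
    ht₁ (hR t₁ ht₁ (by rwa [sub_zero]))
  set J := I ∪ Ioo (t₁ - ε) (t₁ + ε)
  have hJ : IsPreconnected J := hconn.union t₁ ht₁ ⟨by linarith, by linarith⟩ isPreconnected_Ioo
  have hsolγ := isWHSolutionOn_of_hasDerivAt (hopen.union isOpen_Ioo) hJ hγ (Or.inl ht₁)
    (by rw [hγI ht₁]; exact (isWHSolutionOn_iff.1 hsol t₁ ht₁).2)
  have hJI : J = I := hmax J _ _ _ _ _ (hopen.union isOpen_Ioo) hJ subset_union_left hsolγ
    fun t ht => by simp [hγI ht, whCurve]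
  exact hJI ▸ subset_union_right
end

section
/- Consider a Bianchi IX solution (all Nᵢ > 0) of the Wainwright–Hsu equations with constraint, defined on an interval containing [τ₂, τ₁]. If −1 < Σ₊(τ₁) < 1/3 and 9N₁(τ) < N₂(τ) + N₃(τ) for all τ ∈ [τ₂, τ₁], then Σ₊(τ₁) ≤ Σ₊(τ) for all τ ∈ [τ₂, τ₁]. -/
lemma wh_alg (a b n1 n2 n3 : ℝ)
    (h : a^2 + b^2 + (3/4)*(n1^2+n2^2+n3^2 - 2*(n1*n2+n2*n3+n3*n1)) = 1)
    (h1 : 0 < n1)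
    (hn : 9*n1 < n2 + n3) (ha1 : -1 < a) (ha2 : a < 1/3) :
    -(2 - 2*(a^2+b^2))*a - 3*((1/2)*((n2-n3)^2 - n1*(2*n1 - n2 - n3))) < 0 := by
  have key : -(2 - 2*(a^2+b^2))*a - 3*((1/2)*((n2-n3)^2 - n1*(2*n1 - n2 - n3)))
      = (2*(a^2+b^2) - 2)*(a+1) + (9/2)*n1*(n1 - n2 - n3) := by nlinarith [h]
  rw [key]
  have hq : 2*(a^2+b^2) - 2 ≤ 3*n1*(n2+n3) := by
    nlinarith [sq_nonneg (n2-n3), sq_nonneg n1, sq_nonneg b]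
  rcases le_or_gt (2*(a^2+b^2) - 2) 0 with hc | hc
  · nlinarith [mul_pos h1 (by linarith : (0:ℝ) < n2 + n3 - 9*n1),
      mul_nonpos_of_nonpos_of_nonneg hc (by linarith : (0:ℝ) ≤ a + 1)]
  · nlinarith [mul_pos h1 (by linarith : (0:ℝ) < n2 + n3 - 9*n1),
      mul_lt_mul_of_pos_left ha2 hc,
      mul_le_mul_of_nonneg_right hq (by linarith : (0:ℝ) ≤ a + 1),
      mul_pos (mul_pos h1 (by linarith : (0:ℝ) < n2+n3)) (by linarith : (0:ℝ) < 1/3 - a)]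

/-- For a Bianchi IX Wainwright–Hsu solution on `[τ₂, τ₁]` with `-1 < Σ₊(τ₁) < 1/3`
and `9N₁ < N₂ + N₃` throughout, `Σ₊(τ₁)` is a lower bound for `Σ₊` on `[τ₂, τ₁]`. -/
theorem stmt_8 (N1 N2 N3 Sp Sm : ℝ → ℝ) (τ₁ τ₂ : ℝ) (hτ : τ₂ ≤ τ₁)
    (hsol : IsWHSolutionOn N1 N2 N3 Sp Sm (Set.Icc τ₂ τ₁))
    (hIX : ∀ τ ∈ Set.Icc τ₂ τ₁, 0 < N1 τ ∧ 0 < N2 τ ∧ 0 < N3 τ)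
    (hSp : -1 < Sp τ₁ ∧ Sp τ₁ < 1 / 3)
    (hN : ∀ τ ∈ Set.Icc τ₂ τ₁, 9 * N1 τ < N2 τ + N3 τ) :
    ∀ τ ∈ Set.Icc τ₂ τ₁, Sp τ₁ ≤ Sp τ := by
  intro τ₀ hτ₀
  by_contra hlt
  push_neg at hlt
  set c := Sp τ₁ with hc_def
  -- continuity of Sp at each point of the interval
  have hcontAt : ∀ x ∈ Set.Icc τ₂ τ₁, ContinuousAt Sp x := fun x hx =>
    ((hsol x hx).2.2.2.1).continuousAt
  have hSpCont : ContinuousOn Sp (Set.Icc τ₂ τ₁) := fun x hx =>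
    (hcontAt x hx).continuousWithinAt
  -- negativity of the derivative in the good region
  have hderiv : ∀ x ∈ Set.Icc τ₂ τ₁, -1 < Sp x → Sp x < 1/3 → deriv Sp x < 0 := by
    intro x hx h1 h2
    obtain ⟨-, -, -, hS, -, hcon⟩ := hsol x hx
    rw [hS.deriv]
    have hpos := hIX x hx
    have := wh_alg (Sp x) (Sm x) (N1 x) (N2 x) (N3 x) hcon hpos.1 (hN x hx) h1 h2
    simpa [qq, Spl] using this
  -- the first time ≥ τ₀ at which Sp equals c
  set S : Set ℝ := Set.Icc τ₀ τ₁ ∩ Sp ⁻¹' {c} with hS_def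
  have hsub : Set.Icc τ₀ τ₁ ⊆ Set.Icc τ₂ τ₁ := Set.Icc_subset_Icc hτ₀.1 le_rfl
  have hScl : IsClosed S :=
    (hSpCont.mono hsub).preimage_isClosed_of_isClosed isClosed_Icc isClosed_singleton
  have hSne : S.Nonempty := ⟨τ₁, ⟨hτ₀.2, le_rfl⟩, rfl⟩
  have hSbdd : BddBelow S := ⟨τ₀, fun x hx => hx.1.1⟩
  set s := sInf S with hs_def
  have hsS : s ∈ S := hScl.csInf_mem hSne hSbdd
  have hs_mem : s ∈ Set.Icc τ₀ τ₁ := hsS.1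
  have hs_eq : Sp s = c := hsS.2
  have hs_gt : τ₀ < s := by
    rcases lt_or_eq_of_le hs_mem.1 with h | h
    · exact h
    · exact absurd (h ▸ hs_eq) (ne_of_lt hlt)
  -- below s, Sp stays below c
  have hbelow : ∀ x ∈ Set.Ico τ₀ s, Sp x < c := by
    intro x hx
    by_contra h'
    push_neg at h'
    have hx1 : x ≤ τ₁ := hx.2.le.trans hs_mem.2
    have hivt := intermediate_value_Icc hx.1 (hSpCont.mono (Set.Icc_subset_Icc hτ₀.1 hx1))
    have : c ∈ Sp '' Set.Icc τ₀ x := hivt ⟨hlt.le, h'⟩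
    obtain ⟨y, hy, hyc⟩ := this
    have hyS : y ∈ S := ⟨⟨hy.1, hy.2.trans hx1⟩, hyc⟩
    have : s ≤ y := csInf_le hSbdd hyS
    exact absurd (this.trans hy.2) (not_le.mpr hx.2)
  -- find a neighborhood of s where Sp > -1
  have hsIcc : s ∈ Set.Icc τ₂ τ₁ := hsub hs_mem
  have hev : ∀ᶠ u in nhds s, Sp u ∈ Set.Ioi (-1:ℝ) :=
    (hcontAt s hsIcc) (Ioi_mem_nhds (hs_eq ▸ hSp.1))
  obtain ⟨ε, hε, hball⟩ := Metric.eventually_nhds_iff.mp hev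
  set a := max τ₀ (s - ε/2) with ha_def
  have ha_lt : a < s := max_lt hs_gt (by linarith)
  have ha_ge : τ₀ ≤ a := le_max_left _ _
  have haIcc : Set.Icc a s ⊆ Set.Icc τ₂ τ₁ :=
    Set.Icc_subset_Icc (hτ₀.1.trans ha_ge) hs_mem.2
  have hanti : StrictAntiOn Sp (Set.Icc a s) := by
    apply strictAntiOn_of_deriv_neg (convex_Icc a s) (hSpCont.mono haIcc)
    intro x hx
    rw [interior_Icc] at hx
    obtain ⟨hxa, hxs⟩ := hx
    have hxIcc : x ∈ Set.Icc τ₂ τ₁ := haIcc ⟨hxa.le, hxs.le⟩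
    have hxIco : x ∈ Set.Ico τ₀ s := ⟨ha_ge.trans hxa.le, hxs⟩
    have hxlt : Sp x < c := hbelow x hxIco
    have hxgt : -1 < Sp x := by
      apply hball
      rw [Real.dist_eq, abs_of_neg (by linarith : x - s < 0)]
      have : s - ε/2 ≤ a := le_max_right _ _
      linarith
    exact hderiv x hxIcc hxgt (hxlt.trans hSp.2)
  have h1 : Sp s < Sp a := hanti ⟨le_rfl, ha_lt.le⟩ ⟨ha_lt.le, le_rfl⟩ ha_lt
  have h2 : Sp a < c := hbelow a ⟨ha_ge, ha_lt⟩
  rw [hs_eq] at h1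
  linarith
end

section
/- Let (N₁, N₂, N₃, Σ₊, Σ₋) satisfy the Wainwright–Hsu constraint with all Nᵢ > 0, and suppose for some constant C ≥ 1 that N₁N₂N₃ ≤ C. Then Σ₊² + Σ₋² ≤ 1 + 15C. -/
/-- If `a*b*c ≤ C`, `C ≥ 1`, all positive, and `c` is the largest, then `a*b ≤ C`. -/
lemma pair_le (a b c C : ℝ) (ha : 0 < a) (hb : 0 < b) (hc : 0 < c)
    (hC : 1 ≤ C) (h : a * b * c ≤ C) (hac : a ≤ c) (hbc : b ≤ c) : a * b ≤ C := by
  rcases le_or_gt 1 c with h1 | h1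
  · nlinarith
  · nlinarith

/-- For a Bianchi IX point on the Wainwright–Hsu constraint surface with
`N₁N₂N₃ ≤ C` for some `C ≥ 1`, one has `Σ₊² + Σ₋² ≤ 1 + 15C`. -/
theorem stmt_9 (N1 N2 N3 Sp Sm C : ℝ)
    (hcon : Sp ^ 2 + Sm ^ 2 +
      (3 / 4) * (N1 ^ 2 + N2 ^ 2 + N3 ^ 2 - 2 * (N1 * N2 + N2 * N3 + N3 * N1)) = 1)
    (h1 : 0 < N1) (h2 : 0 < N2) (h3 : 0 < N3)
    (hC : 1 ≤ C) (hprod : N1 * N2 * N3 ≤ C) :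
    Sp ^ 2 + Sm ^ 2 ≤ 1 + 15 * C := by
  rcases le_total N1 N2 with hab | hab
  · rcases le_total N2 N3 with hbc | hbc
    · -- N3 largest
      have key : N1 * N2 ≤ C := pair_le N1 N2 N3 C h1 h2 h3 hC hprod (hab.trans hbc) hbc
      nlinarith [sq_nonneg (N3 - N1 - N2)]
    · -- N2 largest
      have key : N1 * N3 ≤ C := pair_le N1 N3 N2 C h1 h3 h2 hC (by nlinarith) hab hbc
      nlinarith [sq_nonneg (N2 - N1 - N3)]
  · rcases le_total N1 N3 with hac | hac
    · -- N3 largest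
      have key : N2 * N1 ≤ C := pair_le N2 N1 N3 C h2 h1 h3 hC (by nlinarith) (hab.trans hac) hac
      nlinarith [sq_nonneg (N3 - N1 - N2)]
    · -- N1 largest
      have key : N2 * N3 ≤ C := pair_le N2 N3 N1 C h2 h3 h1 hC (by nlinarith) hab hac
      nlinarith [sq_nonneg (N1 - N2 - N3)]
end

section
/- Consider a solution of the Wainwright–Hsu system of Bianchi type VIII or IX on (-∞, 0]. If the point x = (n₁, n₂, n₃, s₊, s₋) is an α-limit point of the solution (i.e., there is a sequence τ_k → −∞ with the solution at τ_k converging to x), then n₁n₂n₃ = 0. -/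
/-!
Along a type VIII or IX solution, `ℓ = log |N₁N₂N₃|` has derivative `3q ≥ 0`, so it is
nondecreasing on `(-∞, 0]`. If `n₁n₂n₃ ≠ 0`, then `ℓ(t_k)` converges to the finite value
`log |n₁n₂n₃|`, so the gain of `ℓ` over the windows `[t_k, t_k + δ]` cannot stay bounded
below. It does, though: the trajectory stays near `x` on such windows, and `q` is bounded
below on their second halves. If `q(x) > 0` this is continuity. If `q(x) = 0`, the shear
vanishes at `x`, so the constraint makes the curvature terms `(S₊, S₋)` nonzero there. They
then push the shear away from zero at a linear rate.
-/

open Filter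

open Set Topology Metric

section Trajectories

variable {E : Type*} [NormedAddCommGroup E] [NormedSpace ℝ E]

lemma mul_sub_le_sub_of_hasDerivAt {f f' : ℝ → ℝ} {a b C : ℝ} (hab : a ≤ b)
    (hf : ∀ τ ∈ Icc a b, HasDerivAt f (f' τ) τ) (hC : ∀ τ ∈ Icc a b, C ≤ f' τ) :
    C * (b - a) ≤ f b - f a :=
  (convex_Icc a b).mul_sub_le_image_sub_of_le_deriv
    (fun τ hτ => (hf τ hτ).continuousAt.continuousWithinAt)
    (fun τ hτ => (hf τ (interior_subset hτ)).differentiableAt.differentiableWithinAt)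
    (fun τ hτ => (hf τ (interior_subset hτ)).deriv ▸ hC τ (interior_subset hτ))
    a (left_mem_Icc.2 hab) b (right_mem_Icc.2 hab) hab

lemma dist_le_of_hasDerivAt_of_norm_lt {F : E → E} {u : ℝ → E} {x : E} {R C a b : ℝ}
    (hu : ∀ τ ∈ Icc a b, HasDerivAt u (F (u τ)) τ) (hF : ∀ p ∈ closedBall x R, ‖F p‖ < C)
    (hC : 0 ≤ C) (hR : dist (u a) x + C * (b - a) ≤ R) :
    ∀ τ ∈ Icc a b, dist (u τ) x ≤ dist (u a) x + C * (τ - a) := by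
  have hB (τ : ℝ) : HasDerivAt (fun τ => ‖u a - x‖ + C * (τ - a)) C τ := by
    simpa using (((hasDerivAt_id τ).sub_const a).const_mul C).const_add ‖u a - x‖
  simp only [dist_eq_norm] at hR ⊢
  refine image_norm_le_of_norm_deriv_right_lt_deriv_boundary (f := fun τ => u τ - x)
    (fun τ hτ => ((hu τ hτ).continuousAt.sub continuousAt_const).continuousWithinAt)
    (fun τ hτ => ((hu τ (Ico_subset_Icc_self hτ)).sub_const x).hasDerivWithinAt)
    (by simp) hB fun σ hσ hσR => hF _ ?_
  rw [mem_closedBall, dist_eq_norm, hσR]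
  nlinarith [hσ.2]

lemma exists_forall_dist_lt_of_continuousAt {F : E → E} {x : E} (hF : ContinuousAt F x)
    {ε : ℝ} (hε : 0 < ε) :
    ∃ ρ > 0, ∃ δ > 0, ∀ (u : ℝ → E) (a : ℝ),
      (∀ τ ∈ Icc a (a + δ), HasDerivAt u (F (u τ)) τ) →
      dist (u a) x < ρ → ∀ τ ∈ Icc a (a + δ), dist (u τ) x < ε := by
  obtain ⟨r, hr, hFr⟩ := Metric.continuousAt_iff.1 hF 1 one_pos
  set R := min r ε / 2
  have hR : 0 < R := by positivity
  set C := ‖F x‖ + 1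
  have hC : 0 < C := by positivity
  have hFC : ∀ p ∈ closedBall x R, ‖F p‖ < C := fun p hp => by
    have hpr : dist p x < r := (mem_closedBall.1 hp).trans_lt (by grind)
    have := hFr hpr
    rw [dist_eq_norm] at this
    linarith [norm_le_norm_sub_add (F p) (F x)]
  have hCδ : C * (R / (2 * C)) = R / 2 := by field_simp
  refine ⟨R / 2, by positivity, R / (2 * C), by positivity, fun u a hu ha τ hτ => ?_⟩
  have hstay := dist_le_of_hasDerivAt_of_norm_lt hu hFC hC.le
    (by rw [add_sub_cancel_left, hCδ]; linarith) τ hτ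
  have : C * (τ - a) ≤ R / 2 := hCδ ▸ mul_le_mul_of_nonneg_left (by linarith [hτ.2]) hC.le
  have : R < ε := by grind
  linarith

lemma exists_window_of_pos {F : E → E} {Q : E → ℝ} {x : E} (hF : ContinuousAt F x)
    (hQ : ContinuousAt Q x) (hQx : 0 < Q x) :
    ∃ ρ > 0, ∃ δ > 0, ∃ c > 0, ∀ (u : ℝ → E) (a : ℝ),
      (∀ τ ∈ Icc a (a + δ), HasDerivAt u (F (u τ)) τ) →
      dist (u a) x < ρ → ∀ τ ∈ Icc a (a + δ), c ≤ Q (u τ) := by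
  obtain ⟨ε, hε, hQε⟩ := Metric.continuousAt_iff.1 hQ (Q x / 2) (half_pos hQx)
  obtain ⟨ρ, hρ, δ, hδ, hstay⟩ := exists_forall_dist_lt_of_continuousAt hF hε
  refine ⟨ρ, hρ, δ, hδ, Q x / 2, half_pos hQx, fun u a hu ha τ hτ => ?_⟩
  have := hQε (hstay u a hu ha τ hτ)
  rw [Real.dist_eq] at this
  linarith [neg_abs_le (Q (u τ) - Q x)]

lemma exists_window_of_drift {F : E → E} {x : E} (π : E →L[ℝ] ℝ) (hF : ContinuousAt F x)
    (hπx : π x = 0) (hπF : 0 < π (F x)) :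
    ∃ ρ > 0, ∃ δ > 0, ∃ c > 0, ∀ (u : ℝ → E) (a : ℝ),
      (∀ τ ∈ Icc a (a + δ), HasDerivAt u (F (u τ)) τ) →
      dist (u a) x < ρ → ∀ τ ∈ Icc (a + δ / 2) (a + δ), c ≤ π (u τ) := by
  set m := π (F x) / 2 with hm
  obtain ⟨ε, hε, hπFε⟩ := Metric.continuousAt_iff.1 (π.continuous.continuousAt.comp hF) m
    (half_pos hπF)
  obtain ⟨ρ, hρ, δ, hδ, hstay⟩ := exists_forall_dist_lt_of_continuousAt hF hε
  obtain ⟨ρ', hρ', hπρ'⟩ :=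
    Metric.continuousAt_iff.1 (π.continuous.continuousAt (x := x)) (m * δ / 4) (by positivity)
  refine ⟨min ρ ρ', lt_min hρ hρ', δ, hδ, m * δ / 4, by positivity, fun u a hu ha τ hτ => ?_⟩
  have hτ' : τ ∈ Icc a (a + δ) := ⟨by linarith [hτ.1], hτ.2⟩
  have hdrift : m * (τ - a) ≤ π (u τ) - π (u a) := by
    refine mul_sub_le_sub_of_hasDerivAt hτ'.1 (fun σ hσ => π.hasFDerivAt.comp_hasDerivAt σ
      (hu σ ⟨hσ.1, hσ.2.trans hτ'.2⟩)) fun σ hσ => ?_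
    have := hπFε
      (hstay u a hu (ha.trans_le (min_le_left _ _)) σ ⟨hσ.1, hσ.2.trans hτ'.2⟩)
    rw [Real.dist_eq, Function.comp_apply, Function.comp_apply] at this
    linarith [neg_abs_le (π (F (u σ)) - π (F x)), hm]
  have hstart := hπρ' (ha.trans_le (min_le_right _ _))
  rw [Real.dist_eq, hπx, sub_zero] at hstart
  have : m * (δ / 2) ≤ m * (τ - a) :=
    mul_le_mul_of_nonneg_left (by linarith [hτ.1]) (by positivity)
  linarith [neg_abs_le (π (u a))]

end Trajectories

namespace WainwrightHsu

/-- Points of the state space are `(N₁, N₂, N₃, Σ₊, Σ₋)`. -/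
abbrev Point := ℝ × ℝ × ℝ × ℝ × ℝ

def q (p : Point) : ℝ := 2 * (p.2.2.2.1 ^ 2 + p.2.2.2.2 ^ 2)

noncomputable def sPlus (p : Point) : ℝ :=
  (1 / 2) * ((p.2.1 - p.2.2.1) ^ 2 - p.1 * (2 * p.1 - p.2.1 - p.2.2.1))

noncomputable def sMinus (p : Point) : ℝ :=
  (Real.sqrt 3 / 2) * ((p.2.2.1 - p.2.1) * (p.1 - p.2.1 - p.2.2.1))

noncomputable def field (p : Point) : Point :=
  ((q p - 4 * p.2.2.2.1) * p.1,
    (q p + 2 * p.2.2.2.1 + 2 * Real.sqrt 3 * p.2.2.2.2) * p.2.1,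
    (q p + 2 * p.2.2.2.1 - 2 * Real.sqrt 3 * p.2.2.2.2) * p.2.2.1,
    -(2 - q p) * p.2.2.2.1 - 3 * sPlus p,
    -(2 - q p) * p.2.2.2.2 - 3 * sMinus p)

def constraintSet : Set Point :=
  {p | p.2.2.2.1 ^ 2 + p.2.2.2.2 ^ 2 +
    (3 / 4) * (p.1 ^ 2 + p.2.1 ^ 2 + p.2.2.1 ^ 2 -
      2 * (p.1 * p.2.1 + p.2.1 * p.2.2.1 + p.2.2.1 * p.1)) = 1}

def state (N1 N2 N3 Sp Sm : ℝ → ℝ) (τ : ℝ) : Point := (N1 τ, N2 τ, N3 τ, Sp τ, Sm τ)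

lemma q_nonneg (p : Point) : 0 ≤ q p := by unfold q; positivity

lemma continuous_q : Continuous q := by unfold q; fun_prop

lemma continuous_field : Continuous field := by unfold field q sPlus sMinus; fun_prop

lemma isClosed_constraintSet : IsClosed constraintSet :=
  isClosed_eq (by fun_prop) continuous_const

noncomputable def shearPairing (v : ℝ × ℝ) : Point →L[ℝ] ℝ :=
  (v.1 • ContinuousLinearMap.fst ℝ ℝ ℝ + v.2 • ContinuousLinearMap.snd ℝ ℝ ℝ) ∘L
    ContinuousLinearMap.snd ℝ ℝ (ℝ × ℝ) ∘L ContinuousLinearMap.snd ℝ ℝ (ℝ × ℝ × ℝ) ∘L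
      ContinuousLinearMap.snd ℝ ℝ (ℝ × ℝ × ℝ × ℝ)

lemma shearPairing_apply (v : ℝ × ℝ) (p : Point) :
    shearPairing v p = v.1 * p.2.2.2.1 + v.2 * p.2.2.2.2 := by
  simp [shearPairing]

lemma sPlus_ne_zero_or_sMinus_ne_zero {n1 n2 n3 : ℝ} (h : (n1, n2, n3, 0, 0) ∈ constraintSet) :
    sPlus (n1, n2, n3, 0, 0) ≠ 0 ∨ sMinus (n1, n2, n3, 0, 0) ≠ 0 := by
  simp only [constraintSet, Set.mem_ofPred_eq] at h
  rw [← not_and_or]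
  rintro ⟨hplus, hminus⟩
  replace hplus : (n2 - n3) ^ 2 - n1 * (2 * n1 - n2 - n3) = 0 := by simpa [sPlus] using hplus
  replace hminus : (n3 - n2) * (n1 - n2 - n3) = 0 := by simpa [sMinus] using hminus
  rcases mul_eq_zero.1 hminus with hminus | hminus
  · obtain rfl : n3 = n2 := by linarith
    have : n1 * (n1 - n3) = 0 := by linarith
    rcases mul_eq_zero.1 this with rfl | h13 <;> nlinarith
  · obtain rfl : n1 = n2 + n3 := by linarith
    have : n2 * n3 = 0 := by linarith
    rcases mul_eq_zero.1 this with rfl | rfl <;> nlinarith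

lemma exists_window {x : Point} (hx : x ∈ constraintSet) :
    ∃ ρ > 0, ∃ δ > 0, ∃ c > 0, ∀ (u : ℝ → Point) (a : ℝ),
      (∀ τ ∈ Icc a (a + δ), HasDerivAt u (field (u τ)) τ) →
      dist (u a) x < ρ → ∀ τ ∈ Icc (a + δ / 2) (a + δ), c ≤ q (u τ) := by
  obtain ⟨n1, n2, n3, s1, s2⟩ := x
  rcases (q_nonneg (n1, n2, n3, s1, s2)).lt_or_eq with hq | hq
  · obtain ⟨ρ, hρ, δ, hδ, c, hc, hwin⟩ :=
      exists_window_of_pos continuous_field.continuousAt continuous_q.continuousAt hq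
    exact ⟨ρ, hρ, δ, hδ, c, hc, fun u a hu ha τ hτ =>
      hwin u a hu ha τ ⟨by linarith [hτ.1], hτ.2⟩⟩
  obtain ⟨rfl, rfl⟩ : s1 = 0 ∧ s2 = 0 := by
    simp only [q] at hq
    constructor <;> nlinarith
  -- `v` is the velocity of the shear `(Σ₊, Σ₋)` at `x`; the constraint makes it nonzero
  set v := (-3 * sPlus (n1, n2, n3, 0, 0), -3 * sMinus (n1, n2, n3, 0, 0))
  have hv : 0 < v.1 ^ 2 + v.2 ^ 2 := by
    rcases sPlus_ne_zero_or_sMinus_ne_zero hx with h | h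
    · nlinarith [sq_pos_of_ne_zero h, sq_nonneg v.2]
    · nlinarith [sq_pos_of_ne_zero h, sq_nonneg v.1]
  have hvF : shearPairing v (field (n1, n2, n3, 0, 0)) = v.1 ^ 2 + v.2 ^ 2 := by
    simp only [shearPairing_apply, field, q, v]
    ring
  obtain ⟨ρ, hρ, δ, hδ, c, hc, hwin⟩ := exists_window_of_drift (shearPairing v)
    continuous_field.continuousAt (by simp [shearPairing_apply]) (hvF ▸ hv)
  refine ⟨ρ, hρ, δ, hδ, 2 * c ^ 2 / (v.1 ^ 2 + v.2 ^ 2), by positivity,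
    fun u a hu ha τ hτ => ?_⟩
  have hcv := hwin u a hu ha τ hτ
  rw [shearPairing_apply] at hcv
  rw [div_le_iff₀ hv, q]
  -- Cauchy–Schwarz for `v` and the shear
  nlinarith [mul_self_le_mul_self hc.le hcv,
    sq_nonneg (v.1 * (u τ).2.2.2.2 - v.2 * (u τ).2.2.2.1)]

end WainwrightHsu

section Solutions

variable {N1 N2 N3 Sp Sm : ℝ → ℝ} {S : Set ℝ}

lemma IsWHSolutionOn.hasDerivAt_state (h : IsWHSolutionOn N1 N2 N3 Sp Sm S) {τ : ℝ}
    (hτ : τ ∈ S) :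
    HasDerivAt (WainwrightHsu.state N1 N2 N3 Sp Sm)
      (WainwrightHsu.field (WainwrightHsu.state N1 N2 N3 Sp Sm τ)) τ :=
  let ⟨h1, h2, h3, h4, h5, _⟩ := h τ hτ
  h1.prodMk (h2.prodMk (h3.prodMk (h4.prodMk h5)))

lemma IsWHSolutionOn.hasDerivAt_log_prod (h : IsWHSolutionOn N1 N2 N3 Sp Sm S) {τ : ℝ}
    (hτ : τ ∈ S) (hne : N1 τ * N2 τ * N3 τ ≠ 0) :
    HasDerivAt (fun τ => Real.log (N1 τ * N2 τ * N3 τ)) (3 * qq Sp Sm τ) τ := by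
  obtain ⟨h1, h2, h3, -⟩ := h τ hτ
  convert ((h1.fun_mul h2).fun_mul h3).log hne using 1
  rw [eq_div_iff hne]
  ring

lemma IsWHSolutionOn.monotoneOn_log_prod (h : IsWHSolutionOn N1 N2 N3 Sp Sm S)
    (hS : S.OrdConnected) (hne : ∀ τ ∈ S, N1 τ * N2 τ * N3 τ ≠ 0) :
    MonotoneOn (fun τ => Real.log (N1 τ * N2 τ * N3 τ)) S := fun a ha b hb hab => by
  have hS' : Icc a b ⊆ S := hS.out ha hb
  have := mul_sub_le_sub_of_hasDerivAt hab
    (fun τ hτ => h.hasDerivAt_log_prod (hS' hτ) (hne τ (hS' hτ)))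
    fun τ _ => by unfold qq; positivity
  linarith

end Solutions

lemma MonotoneOn.frequently_lt_add_of_tendsto {ℓ : ℝ → ℝ} {t : ℕ → ℝ} {l : ℝ}
    (hℓ : MonotoneOn ℓ (Iic 0)) (ht0 : ∀ k, t k ≤ 0) (ht : Tendsto t atTop atBot)
    (hℓt : Tendsto (ℓ ∘ t) atTop (𝓝 l)) (δ : ℝ) {ε : ℝ} (hε : 0 < ε) :
    ∃ᶠ k in atTop, ℓ (t k + δ) < ℓ (t k) + ε := by
  have hl : ∀ τ ≤ 0, l ≤ ℓ τ := fun τ hτ =>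
    le_of_tendsto hℓt ((ht.eventually_le_atBot τ).mono fun k hk => hℓ (ht0 k) hτ hk)
  rw [frequently_atTop]
  intro J
  obtain ⟨J', hJ', hJJ'⟩ := ((hℓt.eventually (gt_mem_nhds (lt_add_of_pos_right l hε))).and
    (eventually_ge_atTop J)).exists
  obtain ⟨k, hk, hJ'k⟩ :=
    ((ht.eventually_le_atBot (t J' - δ)).and (eventually_ge_atTop J')).exists
  refine ⟨k, hJJ'.trans hJ'k, ?_⟩
  have := hℓ (show t k + δ ∈ Iic 0 by simp only [mem_Iic]; linarith [ht0 J']) (ht0 J')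
    (by linarith)
  simp only [Function.comp_apply] at hJ'
  linarith [hl _ (ht0 k)]

/-- Any α-limit point of a Bianchi VIII or IX Wainwright–Hsu solution (all `Nᵢ`
nonvanishing) has `n₁n₂n₃ = 0`. -/
theorem stmt_10 (N1 N2 N3 Sp Sm : ℝ → ℝ)
    (hsol : IsWHSolutionOn N1 N2 N3 Sp Sm (Set.Iic 0))
    (htype : ∀ τ ≤ (0 : ℝ), N1 τ ≠ 0 ∧ N2 τ ≠ 0 ∧ N3 τ ≠ 0)
    (n1 n2 n3 s1 s2 : ℝ)
    (hlimit : ∃ t : ℕ → ℝ, (∀ k, t k ≤ 0) ∧ Tendsto t atTop atBot ∧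
      Tendsto (fun k => (N1 (t k), N2 (t k), N3 (t k), Sp (t k), Sm (t k)))
        atTop (nhds (n1, n2, n3, s1, s2))) :
    n1 * n2 * n3 = 0 := by
  obtain ⟨t, ht0, htb, htx⟩ := hlimit
  have hxC : (n1, n2, n3, s1, s2) ∈ WainwrightHsu.constraintSet :=
    WainwrightHsu.isClosed_constraintSet.mem_of_tendsto htx
      (Eventually.of_forall fun k => (hsol (t k) (ht0 k)).2.2.2.2.2)
  obtain ⟨ρ, hρ, δ, hδ, c, hc, hwin⟩ := WainwrightHsu.exists_window hxC
  by_contra hx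
  have hne (τ : ℝ) (hτ : τ ∈ Iic 0) : N1 τ * N2 τ * N3 τ ≠ 0 :=
    let ⟨h1, h2, h3⟩ := htype τ hτ
    mul_ne_zero (mul_ne_zero h1 h2) h3
  set ℓ := fun τ => Real.log (N1 τ * N2 τ * N3 τ)
  have hmono : MonotoneOn ℓ (Iic 0) := hsol.monotoneOn_log_prod ordConnected_Iic hne
  have hℓt : Tendsto (ℓ ∘ t) atTop (𝓝 (Real.log (n1 * n2 * n3))) :=
    (((by fun_prop : Continuous fun p : WainwrightHsu.Point => p.1 * p.2.1 * p.2.2.1).tendsto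
      _).comp htx).log hx
  have hgain : ∀ᶠ k in atTop, ℓ (t k) + 3 * c * (δ / 2) ≤ ℓ (t k + δ) := by
    filter_upwards [htx.eventually (ball_mem_nhds _ hρ), htb.eventually_le_atBot (-δ)]
      with k hk hkδ
    have hq := hwin _ (t k) (fun τ hτ => hsol.hasDerivAt_state (by
      simp only [mem_Iic]; linarith [hτ.2])) hk
    have hτ0 (τ : ℝ) (hτ : τ ∈ Icc (t k + δ / 2) (t k + δ)) : τ ∈ Iic 0 := by
      simp only [mem_Iic]; linarith [hτ.2]
    have hrise := mul_sub_le_sub_of_hasDerivAt (by linarith : t k + δ / 2 ≤ t k + δ)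
      (fun τ hτ => hsol.hasDerivAt_log_prod (hτ0 τ hτ) (hne τ (hτ0 τ hτ))) fun τ hτ =>
        mul_le_mul_of_nonneg_left (hq τ hτ) (by norm_num)
    linarith [hmono (ht0 k) (show t k + δ / 2 ∈ Iic 0 by simp only [mem_Iic]; linarith)
      (by linarith : t k ≤ t k + δ / 2)]
  obtain ⟨k, hlt, hle⟩ := ((hmono.frequently_lt_add_of_tendsto ht0 htb hℓt δ
    (ε := 3 * c * (δ / 2)) (by positivity)).and_eventually hgain).exists
  linarith
end

section
/- The set {(N₁, N₂, N₃, Σ₊, Σ₋) : Σ₋ = 0 and N₂ = N₃} is invariant under the flow of the Wainwright–Hsu system: if a solution satisfies Σ₋(τ₀) = 0 and N₂(τ₀) = N₃(τ₀) at one time, then Σ₋(τ) = 0 and N₂(τ) = N₃(τ) for all τ in its existence interval. -/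
/-! Along a solution, `v = (N₂ - N₃, Σ₋)` satisfies a linear equation `v' = C(τ) v` with continuous
coefficients: `N₂' - N₃' = (q + 2Σ₊)(N₂ - N₃) + 2√3 (N₂ + N₃) Σ₋`, and `S₋` carries the factor
`N₃ - N₂`. A linear field is Lipschitz in `v` uniformly on compact time intervals, so uniqueness of
solutions forces `v ≡ 0` as soon as `v(τ₀) = 0`. -/

open Set ContinuousLinearMap

theorem eq_zero_of_hasDerivAt_eq_clm_apply {E : Type*} [NormedAddCommGroup E] [NormedSpace ℝ E]
    {C : ℝ → E →L[ℝ] E} (hC : Continuous C) {v : ℝ → E}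
    (hv : ∀ t, HasDerivAt v (C t (v t)) t) {t₀ : ℝ} (h₀ : v t₀ = 0) : v = 0 := by
  funext t
  rw [Pi.zero_apply]
  obtain ⟨a, b, ht, ht₀⟩ : ∃ a b, t ∈ Ioo a b ∧ t₀ ∈ Ioo a b :=
    ⟨min t t₀ - 1, max t t₀ + 1, by simp only [mem_Ioo]; grind⟩
  obtain ⟨K, hK⟩ := isCompact_Icc.exists_bound_of_continuousOn (hC.continuousOn (s := Icc a b))
  have hLip (s : ℝ) (hs : s ∈ Ioo a b) : LipschitzOnWith K.toNNReal (C s) univ :=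
    (lipschitzWith_of_opNorm_le
      ((hK s (Ioo_subset_Icc_self hs)).trans K.le_coe_toNNReal)).lipschitzOnWith
  exact ODE_solution_unique_of_mem_Ioo (v := fun s x ↦ C s x) (g := 0) hLip ht₀
    (fun s _ ↦ ⟨hv s, trivial⟩) (fun s _ ↦ ⟨by simp, trivial⟩) h₀ ht

noncomputable def whCoeff (N1 N2 N3 Sp Sm : ℝ → ℝ) (τ : ℝ) : ℝ × ℝ →L[ℝ] ℝ × ℝ :=
  ((qq Sp Sm τ + 2 * Sp τ) • fst ℝ ℝ ℝ + (2 * √3 * (N2 τ + N3 τ)) • snd ℝ ℝ ℝ).prod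
    ((3 * √3 / 2 * (N1 τ - N2 τ - N3 τ)) • fst ℝ ℝ ℝ - (2 - qq Sp Sm τ) • snd ℝ ℝ ℝ)

namespace IsWHSolutionOn

variable {N1 N2 N3 Sp Sm : ℝ → ℝ} (hsol : IsWHSolutionOn N1 N2 N3 Sp Sm univ)
include hsol

theorem continuous_whCoeff : Continuous (whCoeff N1 N2 N3 Sp Sm) := by
  have h := fun τ ↦ hsol τ (mem_univ τ)
  have hN1 : Continuous N1 := continuous_iff_continuousAt.2 fun τ ↦ (h τ).1.continuousAt
  have hN2 : Continuous N2 := continuous_iff_continuousAt.2 fun τ ↦ (h τ).2.1.continuousAt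
  have hN3 : Continuous N3 := continuous_iff_continuousAt.2 fun τ ↦ (h τ).2.2.1.continuousAt
  have hSp : Continuous Sp := continuous_iff_continuousAt.2 fun τ ↦ (h τ).2.2.2.1.continuousAt
  have hSm : Continuous Sm := continuous_iff_continuousAt.2 fun τ ↦ (h τ).2.2.2.2.1.continuousAt
  have hq : Continuous (qq Sp Sm) := by unfold qq; fun_prop
  exact (prodₗᵢ ℝ).continuous.comp (f := fun τ ↦ (_, _)) (by fun_prop)

theorem hasDerivAt_whCoeff (τ : ℝ) :
    HasDerivAt (fun t ↦ (N2 t - N3 t, Sm t)) (whCoeff N1 N2 N3 Sp Sm τ (N2 τ - N3 τ, Sm τ)) τ := by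
  obtain ⟨-, hN2, hN3, -, hSm, -⟩ := hsol τ (mem_univ τ)
  refine ((hN2.sub hN3).prodMk hSm).congr_deriv ?_
  simp only [whCoeff, Smi, prod_apply, add_apply, sub_apply, smul_apply, coe_fst', coe_snd',
    smul_eq_mul, Prod.mk.injEq]
  constructor <;> ring

end IsWHSolutionOn

/-- The set `{Σ₋ = 0, N₂ = N₃}` is invariant under the Wainwright–Hsu flow. -/
theorem stmt_13 (N1 N2 N3 Sp Sm : ℝ → ℝ)
    (hsol : IsWHSolutionOn N1 N2 N3 Sp Sm Set.univ)
    (τ₀ : ℝ) (hSm : Sm τ₀ = 0) (hN : N2 τ₀ = N3 τ₀) :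
    ∀ τ : ℝ, Sm τ = 0 ∧ N2 τ = N3 τ := by
  have hzero : (fun t ↦ (N2 t - N3 t, Sm t)) = 0 :=
    eq_zero_of_hasDerivAt_eq_clm_apply hsol.continuous_whCoeff hsol.hasDerivAt_whCoeff
      (t₀ := τ₀) (by simp [hSm, hN])
  intro τ
  have hτ := congrFun hzero τ
  simp only [Pi.zero_apply, Prod.mk_eq_zero, sub_eq_zero] at hτ
  exact ⟨hτ.2, hτ.1⟩
end

section
/- Let σ₁, σ₂, σ₃, f₁, f₂, f₃, f₀, θ be real numbers with σ₁+σ₂+σ₃ = 0, f₀² ≥ f₁²+f₂²+f₃² (causality), and θ > 0 or θ < 0. Then (θ²/3)(f₁²+f₂²+f₃²) + θ·Σσ_k f_k² + f₀²·Σσ_k² + (θ²/3)f₀² ≥ ((2−√2)/3)·θ²·f₀². -/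
set_option maxHeartbeats 1000000 in
/-- The pointwise estimate used in the geodesic incompleteness argument:
for trace-free `(σ₁,σ₂,σ₃)`, causal `(f₀,f₁,f₂,f₃)` and `θ ≠ 0`,
`d/ds (f₀θ) ≥ ((2-√2)/3) θ² f₀²`. -/
theorem stmt_16 (σ1 σ2 σ3 f0 f1 f2 f3 θ : ℝ)
    (htr : σ1 + σ2 + σ3 = 0)
    (hcausal : f1 ^ 2 + f2 ^ 2 + f3 ^ 2 ≤ f0 ^ 2)
    (hθ : 0 < θ ∨ θ < 0) :
    ((2 - Real.sqrt 2) / 3) * θ ^ 2 * f0 ^ 2 ≤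
      (θ ^ 2 / 3) * (f1 ^ 2 + f2 ^ 2 + f3 ^ 2) +
      θ * (σ1 * f1 ^ 2 + σ2 * f2 ^ 2 + σ3 * f3 ^ 2) +
      f0 ^ 2 * (σ1 ^ 2 + σ2 ^ 2 + σ3 ^ 2) +
      (θ ^ 2 / 3) * f0 ^ 2 := by
  have hr : 1 ≤ Real.sqrt 2 := by
    rw [show (1:ℝ) = Real.sqrt 1 by simp]
    exact Real.sqrt_le_sqrt (by norm_num)
  rcases eq_or_ne f0 0 with h0 | h0
  · have h1 : f1 = 0 := by nlinarith [sq_nonneg f1, sq_nonneg f2, sq_nonneg f3]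
    have h2 : f2 = 0 := by nlinarith [sq_nonneg f1, sq_nonneg f2, sq_nonneg f3]
    have h3 : f3 = 0 := by nlinarith [sq_nonneg f1, sq_nonneg f2, sq_nonneg f3]
    subst h0 h1 h2 h3; simp
  · have h0' : 0 < f0 ^ 2 := by positivity
    have hFnn : (0:ℝ) ≤ f1 ^ 2 + f2 ^ 2 + f3 ^ 2 := by positivity
    have k1 := sq_nonneg (2 * f0 ^ 2 * σ1 + θ * (f1 ^ 2 - (f1 ^ 2 + f2 ^ 2 + f3 ^ 2) / 3))
    have k2 := sq_nonneg (2 * f0 ^ 2 * σ2 + θ * (f2 ^ 2 - (f1 ^ 2 + f2 ^ 2 + f3 ^ 2) / 3))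
    have k3 := sq_nonneg (2 * f0 ^ 2 * σ3 + θ * (f3 ^ 2 - (f1 ^ 2 + f2 ^ 2 + f3 ^ 2) / 3))
    have htr' : θ * (f1 ^ 2 + f2 ^ 2 + f3 ^ 2) * f0 ^ 2 * (σ1 + σ2 + σ3) = 0 := by
      rw [htr]; ring
    have hff : f1 ^ 4 + f2 ^ 4 + f3 ^ 4 ≤ (f1 ^ 2 + f2 ^ 2 + f3 ^ 2) ^ 2 := by
      nlinarith [sq_nonneg (f1 * f2), sq_nonneg (f2 * f3), sq_nonneg (f1 * f3)]
    have A : 0 ≤ 4 * f0 ^ 2 * (f0 ^ 2 * (σ1 ^ 2 + σ2 ^ 2 + σ3 ^ 2)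
        + θ * (σ1 * f1 ^ 2 + σ2 * f2 ^ 2 + σ3 * f3 ^ 2))
        + θ ^ 2 * (f1 ^ 4 + f2 ^ 4 + f3 ^ 4 - (f1 ^ 2 + f2 ^ 2 + f3 ^ 2) ^ 2 / 3) := by
      nlinarith [k1, k2, k3, htr']
    have B : θ ^ 2 * (f1 ^ 4 + f2 ^ 4 + f3 ^ 4 - (f1 ^ 2 + f2 ^ 2 + f3 ^ 2) ^ 2 / 3) ≤
        4 * f0 ^ 2 * (θ ^ 2 / 3 * (f1 ^ 2 + f2 ^ 2 + f3 ^ 2)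
          + (Real.sqrt 2 - 1) / 3 * θ ^ 2 * f0 ^ 2) := by
      nlinarith [mul_le_mul_of_nonneg_left hff (sq_nonneg θ),
        mul_nonneg (sq_nonneg θ) (mul_nonneg hFnn (sub_nonneg.mpr hcausal)),
        mul_nonneg (sub_nonneg.mpr hr) (mul_nonneg (sq_nonneg θ)
          (mul_nonneg h0'.le h0'.le))]
    nlinarith [A, B, h0']
end
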